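/- arXiv:1804.04019 — 3 statements merged into one kernel-verified Lean document; each statement's English description precedes it below -/
import Mathlib

section
/- For α > (d−1)/2, the quantity sup_{W∈ℝ^d} ⟨W⟩^{2α} ∫_{ℝ^d} dw / (⟨w⟩^{2α+1} ⟨W−w⟩^{2α}) is finite. -/
open MeasureTheory Real
open scoped ENNReal

noncomputable section

abbrev Ed (d : ℕ) : Type := EuclideanSpace ℝ (Fin d)

def jap {d : ℕ} (y : Ed d) : ℝ := Real.sqrt (1 + ‖y‖ ^ 2)

lemma one_le_jap {d : ℕ} (y : Ed d) : 1 ≤ jap y := by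
  rw [jap, Real.one_le_sqrt]
  nlinarith [sq_nonneg ‖y‖]

lemma jap_continuous {d : ℕ} : Continuous (jap (d := d)) := by
  unfold jap
  fun_prop

lemma jap_sub_le {d : ℕ} (W w : Ed d) : jap W ≤ jap w + jap (W - w) := by
  set a := ‖w‖
  set b := ‖W - w‖
  have ha : 0 ≤ a := norm_nonneg _
  have hb : 0 ≤ b := norm_nonneg _
  have hW : ‖W‖ ≤ a + b := by
    calc ‖W‖ = ‖w + (W - w)‖ := by rw [add_sub_cancel]
    _ ≤ a + b := norm_add_le _ _
  have sa := Real.sq_sqrt (by nlinarith [sq_nonneg a] : (0:ℝ) ≤ 1 + a ^ 2)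
  have sb := Real.sq_sqrt (by nlinarith [sq_nonneg b] : (0:ℝ) ≤ 1 + b ^ 2)
  have sa0 : 0 ≤ Real.sqrt (1 + a ^ 2) := Real.sqrt_nonneg _
  have sb0 : 0 ≤ Real.sqrt (1 + b ^ 2) := Real.sqrt_nonneg _
  have haa : a ≤ Real.sqrt (1 + a ^ 2) := by
    rw [Real.le_sqrt ha]
    all_goals nlinarith [sq_nonneg a]
  have hbb : b ≤ Real.sqrt (1 + b ^ 2) := by
    rw [Real.le_sqrt hb]
    all_goals nlinarith [sq_nonneg b]
  have key : 1 + ‖W‖ ^ 2 ≤ (Real.sqrt (1 + a ^ 2) + Real.sqrt (1 + b ^ 2)) ^ 2 := by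
    nlinarith [norm_nonneg W, mul_le_mul haa hbb hb sa0]
  calc jap W = Real.sqrt (1 + ‖W‖ ^ 2) := rfl
  _ ≤ Real.sqrt ((Real.sqrt (1 + a ^ 2) + Real.sqrt (1 + b ^ 2)) ^ 2) := Real.sqrt_le_sqrt key
  _ = Real.sqrt (1 + a ^ 2) + Real.sqrt (1 + b ^ 2) := Real.sqrt_sq (by positivity)
  _ = jap w + jap (W - w) := rfl

/-- For `α > (d−1)/2`,
`sup_{W} ⟨W⟩^{2α} ∫ dw / (⟨w⟩^{2α+1} ⟨W−w⟩^{2α})` is finite. -/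
theorem stmt_9 (d : ℕ) (hd : 1 ≤ d) (α : ℝ) (hα : ((d : ℝ) - 1) / 2 < α) :
    ∃ C : ℝ≥0∞, C ≠ ⊤ ∧ ∀ W : Ed d,
      ENNReal.ofReal ((jap W) ^ (2 * α)) *
        ∫⁻ w : Ed d,
          ENNReal.ofReal (1 / ((jap w) ^ (2 * α + 1) * (jap (W - w)) ^ (2 * α))) ≤ C := by
  have hα0 : 0 ≤ 2 * α := by
    have h1d : (1:ℝ) ≤ d := by exact_mod_cast hd
    nlinarith
  have hr0 : (0:ℝ) < 2 * α + 1 := by linarith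
  have hdr : (d:ℝ) < 2 * α + 1 := by nlinarith
  -- the basic integrand
  set G : Ed d → ℝ≥0∞ := fun w => ENNReal.ofReal (1 / (jap w) ^ (2 * α + 1)) with hG
  have hGmeas : Measurable G := by
    apply Measurable.ennreal_ofReal
    apply Measurable.const_div
    exact (Real.continuous_rpow_const hr0.le).measurable.comp jap_continuous.measurable
  -- finiteness of ∫ G
  have hJ : ∫⁻ w : Ed d, G w < ⊤ := by
    have hbound : ∀ w : Ed d, G w ≤
        ENNReal.ofReal ((2:ℝ) ^ ((2 * α + 1) / 2) * (1 + ‖w‖) ^ (-(2 * α + 1))) := by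
      intro w
      apply ENNReal.ofReal_le_ofReal
      have h1 : (jap w) ^ (2 * α + 1) = (1 + ‖w‖ ^ 2) ^ ((2 * α + 1) / 2) := by
        rw [jap, Real.sqrt_eq_rpow, ← Real.rpow_mul (by positivity)]
        ring_nf
      rw [h1, one_div, ← Real.rpow_neg (by positivity)]
      have := rpow_neg_one_add_norm_sq_le (r := 2 * α + 1) w hr0
      calc (1 + ‖w‖ ^ 2) ^ (-((2 * α + 1) / 2))
          = (1 + ‖w‖ ^ 2) ^ (-(2 * α + 1) / 2) := by ring_nf
        _ ≤ (2:ℝ) ^ ((2 * α + 1) / 2) * (1 + ‖w‖) ^ (-(2 * α + 1)) := this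
    calc ∫⁻ w : Ed d, G w
        ≤ ∫⁻ w : Ed d, ENNReal.ofReal ((2:ℝ) ^ ((2 * α + 1) / 2) *
            (1 + ‖w‖) ^ (-(2 * α + 1))) := lintegral_mono hbound
      _ = ENNReal.ofReal ((2:ℝ) ^ ((2 * α + 1) / 2)) *
            ∫⁻ w : Ed d, ENNReal.ofReal ((1 + ‖w‖) ^ (-(2 * α + 1))) := by
          simp_rw [ENNReal.ofReal_mul (by positivity : (0:ℝ) ≤ (2:ℝ) ^ ((2 * α + 1) / 2))]
          exact lintegral_const_mul' _ _ ENNReal.ofReal_ne_top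
      _ < ⊤ := by
          apply ENNReal.mul_lt_top ENNReal.ofReal_lt_top
          have : (Module.finrank ℝ (Ed d) : ℝ) < 2 * α + 1 := by
            rw [finrank_euclideanSpace_fin]; exact hdr
          exact finite_integral_one_add_norm this
  refine ⟨ENNReal.ofReal ((2:ℝ) ^ (2 * α)) * ((∫⁻ w : Ed d, G w) + ∫⁻ w : Ed d, G w),
    ?_, ?_⟩
  · exact (ENNReal.mul_lt_top ENNReal.ofReal_lt_top (ENNReal.add_lt_top.2 ⟨hJ, hJ⟩)).ne
  intro W
  -- pointwise bound
  have hpt : ∀ w : Ed d,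
      ENNReal.ofReal ((jap W) ^ (2 * α)) *
        ENNReal.ofReal (1 / ((jap w) ^ (2 * α + 1) * (jap (W - w)) ^ (2 * α)))
      ≤ ENNReal.ofReal ((2:ℝ) ^ (2 * α)) * (G w + G (W - w)) := by
    intro w
    set A := jap w with hA
    set B := jap (W - w) with hB
    have hA1 : 1 ≤ A := one_le_jap w
    have hB1 : 1 ≤ B := one_le_jap (W - w)
    have hA0 : 0 < A := lt_of_lt_of_le one_pos hA1
    have hB0 : 0 < B := lt_of_lt_of_le one_pos hB1
    have hJle : jap W ≤ A + B := jap_sub_le W w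
    have hJ0 : 0 < jap W := lt_of_lt_of_le one_pos (one_le_jap W)
    have hreal : (jap W) ^ (2 * α) * (1 / (A ^ (2 * α + 1) * B ^ (2 * α)))
        ≤ (2:ℝ) ^ (2 * α) * (1 / A ^ (2 * α + 1) + 1 / B ^ (2 * α + 1)) := by
      have hApow : (0:ℝ) < A ^ (2 * α + 1) := Real.rpow_pos_of_pos hA0 _
      have hBpow : (0:ℝ) < B ^ (2 * α + 1) := Real.rpow_pos_of_pos hB0 _
      have hAα : (0:ℝ) < A ^ (2 * α) := Real.rpow_pos_of_pos hA0 _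
      have hBα : (0:ℝ) < B ^ (2 * α) := Real.rpow_pos_of_pos hB0 _
      have hAsplit : A ^ (2 * α + 1) = A ^ (2 * α) * A := Real.rpow_add_one hA0.ne' _
      have hBsplit : B ^ (2 * α + 1) = B ^ (2 * α) * B := Real.rpow_add_one hB0.ne' _
      rcases le_total A B with hAB | hAB
      · -- A ≤ B : jap W ≤ 2B
        have hJB : jap W ≤ 2 * B := by linarith
        have hJpow : (jap W) ^ (2 * α) ≤ (2:ℝ) ^ (2 * α) * B ^ (2 * α) := by
          rw [← Real.mul_rpow (by norm_num) hB0.le]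
          exact Real.rpow_le_rpow hJ0.le hJB hα0
        have step : (jap W) ^ (2 * α) * (1 / (A ^ (2 * α + 1) * B ^ (2 * α)))
            ≤ (2:ℝ) ^ (2 * α) * (1 / A ^ (2 * α + 1)) := by
          rw [mul_one_div, mul_one_div, div_le_div_iff₀ (by positivity) hApow]
          calc (jap W) ^ (2 * α) * A ^ (2 * α + 1)
              ≤ ((2:ℝ) ^ (2 * α) * B ^ (2 * α)) * A ^ (2 * α + 1) :=
                mul_le_mul_of_nonneg_right hJpow hApow.le
            _ = (2:ℝ) ^ (2 * α) * (A ^ (2 * α + 1) * B ^ (2 * α)) := by ring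
        have : (0:ℝ) ≤ (2:ℝ) ^ (2 * α) * (1 / B ^ (2 * α + 1)) := by positivity
        linarith [step]
      · -- B ≤ A : jap W ≤ 2A
        have hJA : jap W ≤ 2 * A := by linarith
        have hJpow : (jap W) ^ (2 * α) ≤ (2:ℝ) ^ (2 * α) * A ^ (2 * α) := by
          rw [← Real.mul_rpow (by norm_num) hA0.le]
          exact Real.rpow_le_rpow hJ0.le hJA hα0
        have step : (jap W) ^ (2 * α) * (1 / (A ^ (2 * α + 1) * B ^ (2 * α)))
            ≤ (2:ℝ) ^ (2 * α) * (1 / B ^ (2 * α + 1)) := by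
          rw [mul_one_div, mul_one_div, div_le_div_iff₀ (by positivity) hBpow]
          calc (jap W) ^ (2 * α) * B ^ (2 * α + 1)
              ≤ ((2:ℝ) ^ (2 * α) * A ^ (2 * α)) * (B ^ (2 * α) * B) := by
                rw [← hBsplit]; exact mul_le_mul_of_nonneg_right hJpow hBpow.le
            _ ≤ ((2:ℝ) ^ (2 * α) * A ^ (2 * α)) * (B ^ (2 * α) * A) := by
                have h2 : (0:ℝ) ≤ (2:ℝ) ^ (2 * α) * A ^ (2 * α) := by positivity
                apply mul_le_mul_of_nonneg_left _ h2
                exact mul_le_mul_of_nonneg_left hAB hBα.le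
            _ = (2:ℝ) ^ (2 * α) * (A ^ (2 * α) * A * B ^ (2 * α)) := by ring
            _ = (2:ℝ) ^ (2 * α) * (A ^ (2 * α + 1) * B ^ (2 * α)) := by rw [← hAsplit]
        have : (0:ℝ) ≤ (2:ℝ) ^ (2 * α) * (1 / A ^ (2 * α + 1)) := by positivity
        linarith [step]
    calc ENNReal.ofReal ((jap W) ^ (2 * α)) *
          ENNReal.ofReal (1 / (A ^ (2 * α + 1) * B ^ (2 * α)))
        = ENNReal.ofReal ((jap W) ^ (2 * α) * (1 / (A ^ (2 * α + 1) * B ^ (2 * α)))) :=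
          (ENNReal.ofReal_mul (by positivity)).symm
      _ ≤ ENNReal.ofReal ((2:ℝ) ^ (2 * α) *
            (1 / A ^ (2 * α + 1) + 1 / B ^ (2 * α + 1))) := ENNReal.ofReal_le_ofReal hreal
      _ = ENNReal.ofReal ((2:ℝ) ^ (2 * α)) * (G w + G (W - w)) := by
          rw [ENNReal.ofReal_mul (by positivity), ENNReal.ofReal_add (by positivity) (by positivity)]
  -- translation invariance
  have htrans : ∫⁻ w : Ed d, G (W - w) = ∫⁻ w : Ed d, G w := by
    calc ∫⁻ w : Ed d, G (W - w)
        = ∫⁻ w : Ed d, G ((MeasurableEquiv.subLeft W) w) := rfl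
      _ = ∫⁻ w : Ed d, G w ∂(Measure.map (MeasurableEquiv.subLeft W) volume) :=
          (lintegral_map_equiv G (MeasurableEquiv.subLeft W)).symm
      _ = ∫⁻ w : Ed d, G w := by
          congr 1
          exact Measure.map_sub_left_eq_self volume W
  calc ENNReal.ofReal ((jap W) ^ (2 * α)) *
        ∫⁻ w : Ed d,
          ENNReal.ofReal (1 / ((jap w) ^ (2 * α + 1) * (jap (W - w)) ^ (2 * α)))
      = ∫⁻ w : Ed d, ENNReal.ofReal ((jap W) ^ (2 * α)) *
          ENNReal.ofReal (1 / ((jap w) ^ (2 * α + 1) * (jap (W - w)) ^ (2 * α))) :=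
        (lintegral_const_mul' _ _ ENNReal.ofReal_ne_top).symm
    _ ≤ ∫⁻ w : Ed d, ENNReal.ofReal ((2:ℝ) ^ (2 * α)) * (G w + G (W - w)) :=
        lintegral_mono hpt
    _ = ENNReal.ofReal ((2:ℝ) ^ (2 * α)) * ∫⁻ w : Ed d, (G w + G (W - w)) :=
        lintegral_const_mul' _ _ ENNReal.ofReal_ne_top
    _ = ENNReal.ofReal ((2:ℝ) ^ (2 * α)) * ((∫⁻ w : Ed d, G w) + ∫⁻ w : Ed d, G (W - w)) := by
        rw [lintegral_add_left hGmeas]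
    _ = ENNReal.ofReal ((2:ℝ) ^ (2 * α)) * ((∫⁻ w : Ed d, G w) + ∫⁻ w : Ed d, G w) := by
        rw [htrans]
end
end

section
/- For α > (d−1)/2, sup over all affine hyperplanes P ⊂ ℝ^d and all W ∈ ℝ^d of the integral ∫_P dS(s) ⟨W⟩^{2α} / (⟨s⟩^{2α} ⟨s+W⟩^{2α}) is finite. -/
open MeasureTheory Real Module Set
open scoped ENNReal RealInnerProductSpace

noncomputable section

lemma jap_rpow {d : ℕ} (y : Ed d) (α : ℝ) :
    jap y ^ (2 * α) = (1 + ‖y‖ ^ 2) ^ α := by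
  have h0 : (0 : ℝ) ≤ 1 + ‖y‖ ^ 2 := by positivity
  rw [jap, Real.sqrt_eq_rpow, ← Real.rpow_mul h0]
  congr 1
  ring

/-- abstract ratio bound -/
lemma rpow_div_le (α : ℝ) (hα : 0 < α) {A B C K : ℝ} (hA : 0 < A) (hB : 0 < B)
    (hC : 0 ≤ C) (hK : 0 ≤ K) (h : C ≤ K * A * B) :
    C ^ α / (A ^ α * B ^ α) ≤ K ^ α := by
  rw [div_le_iff₀ (by positivity)]
  calc C ^ α ≤ (K * A * B) ^ α := Real.rpow_le_rpow hC h hα.le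
    _ = K ^ α * (A ^ α * B ^ α) := by
        rw [Real.mul_rpow (by positivity) hB.le, Real.mul_rpow hK hA.le]; ring

lemma case_bound (α : ℝ) (hα : 0 < α) {SA SB CW x y : ℝ}
    (hx : 1 ≤ x) (hy : 1 ≤ y) (hSA : x ^ 2 / 2 ≤ SA) (hSB : y ^ 2 / 2 ≤ SB)
    (hCW0 : 0 ≤ CW) (hCW : CW ≤ 4 * y ^ 2) :
    CW ^ α / (SA ^ α * SB ^ α) ≤ 16 ^ α * x ^ (-(2 * α)) := by
  have hx0 : (0 : ℝ) < x := lt_of_lt_of_le one_pos hx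
  have hy0 : (0 : ℝ) < y := lt_of_lt_of_le one_pos hy
  have hSA0 : (0 : ℝ) < SA := lt_of_lt_of_le (by positivity) hSA
  have hSB0 : (0 : ℝ) < SB := lt_of_lt_of_le (by positivity) hSB
  have h : CW ≤ (16 / x ^ 2) * SA * SB := by
    have h1 : (16 / x ^ 2) * (x ^ 2 / 2) * (y ^ 2 / 2) ≤ (16 / x ^ 2) * SA * SB := by
      have h2 : (0:ℝ) ≤ 16 / x ^ 2 := by positivity
      have := mul_le_mul (mul_le_mul_of_nonneg_left hSA h2) hSB (by positivity)
        (by positivity)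
      linarith
    have h3 : (16 / x ^ 2) * (x ^ 2 / 2) * (y ^ 2 / 2) = 4 * y ^ 2 := by
      field_simp; ring
    linarith
  refine (rpow_div_le α hα hSA0 hSB0 hCW0 (by positivity) h).trans_eq ?_
  rw [Real.div_rpow (by norm_num) (by positivity)]
  rw [← Real.rpow_natCast x 2, ← Real.rpow_mul hx0.le, Real.rpow_neg hx0.le]
  rw [div_eq_mul_inv]
  norm_num

lemma pointwise_bound {d : ℕ} (α : ℝ) (hα : 0 < α) (s W : Ed d) :
    jap W ^ (2 * α) / (jap s ^ (2 * α) * jap (s + W) ^ (2 * α)) ≤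
      16 ^ α * ((1 + ‖s‖) ^ (-(2 * α)) + (1 + ‖s + W‖) ^ (-(2 * α))) := by
  set a : ℝ := 1 + ‖s‖ with ha_def
  set b : ℝ := 1 + ‖s + W‖ with hb_def
  have ha : (1 : ℝ) ≤ a := by simp [ha_def, norm_nonneg]
  have hb : (1 : ℝ) ≤ b := by simp [hb_def, norm_nonneg]
  have ha0 : (0 : ℝ) < a := lt_of_lt_of_le one_pos ha
  have hb0 : (0 : ℝ) < b := lt_of_lt_of_le one_pos hb
  have hW : ‖W‖ ≤ ‖s + W‖ + ‖s‖ := by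
    have := norm_sub_le (s + W) s
    simpa [add_sub_cancel_left, norm_sub_rev] using this
  have hlowA : a ^ 2 / 2 ≤ 1 + ‖s‖ ^ 2 := by
    rw [ha_def]; nlinarith [norm_nonneg s, sq_nonneg (1 - ‖s‖)]
  have hlowB : b ^ 2 / 2 ≤ 1 + ‖s + W‖ ^ 2 := by
    rw [hb_def]; nlinarith [norm_nonneg (s + W), sq_nonneg (1 - ‖s + W‖)]
  have hCW0 : (0 : ℝ) ≤ 1 + ‖W‖ ^ 2 := by positivity
  rw [jap_rpow, jap_rpow, jap_rpow]
  rcases le_total a b with hab | hab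
  · have hCW : 1 + ‖W‖ ^ 2 ≤ 4 * b ^ 2 := by nlinarith [norm_nonneg W]
    have := case_bound α hα ha hb hlowA hlowB hCW0 hCW
    have hpos : (0 : ℝ) ≤ b ^ (-(2 * α)) := Real.rpow_nonneg hb0.le _
    nlinarith [Real.rpow_nonneg (le_of_lt (show (0:ℝ) < 16 by norm_num)) α]
  · have hCW : 1 + ‖W‖ ^ 2 ≤ 4 * a ^ 2 := by nlinarith [norm_nonneg W]
    have := case_bound α hα hb ha hlowB hlowA hCW0 hCW
    rw [mul_comm ((1 + ‖s + W‖ ^ 2) ^ α) ((1 + ‖s‖ ^ 2) ^ α)] at this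
    have hpos : (0 : ℝ) ≤ a ^ (-(2 * α)) := Real.rpow_nonneg ha0.le _
    nlinarith [Real.rpow_nonneg (le_of_lt (show (0:ℝ) < 16 by norm_num)) α]

lemma finite_I (n : ℕ) {r : ℝ} (h : (n : ℝ) < r) :
    (∫⁻ x : EuclideanSpace ℝ (Fin n),
        ENNReal.ofReal ((1 + ‖x‖) ^ (-r)) ∂(μH[(n : ℝ)])) < ⊤ := by
  have e1 : (n : ℝ) = ((finrank ℝ (EuclideanSpace ℝ (Fin n)) : ℕ) : ℝ) := by
    rw [finrank_euclideanSpace_fin]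
  rw [e1]
  exact finite_integral_one_add_norm (by rw [← e1]; exact h)

lemma hyperplane_le (n : ℕ) {r : ℝ} (hr : 0 ≤ r)
    (u : Ed (n+1)) (hu : ‖u‖ = 1) (c : ℝ) (W : Ed (n+1)) :
    (∫⁻ s in {s : Ed (n+1) | (⟪u, s⟫ : ℝ) = c},
        ENNReal.ofReal ((1 + ‖s + W‖) ^ (-r)) ∂μH[((n+1 : ℕ) : ℝ) - 1])
      ≤ ∫⁻ x : EuclideanSpace ℝ (Fin n),
          ENNReal.ofReal ((1 + ‖x‖) ^ (-r)) ∂(μH[(n : ℝ)]) := by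
  haveI : Fact (finrank ℝ (Ed (n+1)) = n + 1) := ⟨finrank_euclideanSpace_fin⟩
  have hu0 : u ≠ 0 := by
    intro h; rw [h, norm_zero] at hu; norm_num at hu
  set e := (OrthonormalBasis.fromOrthogonalSpanSingleton (𝕜 := ℝ) n hu0).repr.symm with he
  set p : Ed (n+1) := c • u - (W - (⟪u, W⟫ : ℝ) • u) with hp
  set φ : EuclideanSpace ℝ (Fin n) → Ed (n+1) := fun t => p + (e t : Ed (n+1)) with hφ
  have huu : (⟪u, u⟫ : ℝ) = 1 := by
    rw [real_inner_self_eq_norm_sq, hu]; norm_num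
  have orth : ∀ x : (ℝ ∙ u)ᗮ, (⟪u, (x : Ed (n+1))⟫ : ℝ) = 0 := fun x =>
    Submodule.mem_orthogonal_singleton_iff_inner_right.mp x.2
  have hinnerp : (⟪u, p⟫ : ℝ) = c := by
    rw [hp, inner_sub_right, inner_sub_right, real_inner_smul_right,
      real_inner_smul_right, huu]
    ring
  have hiso : Isometry φ := by
    apply Isometry.of_dist_eq
    intro t₁ t₂
    rw [dist_eq_norm, dist_eq_norm]
    have h1 : φ t₁ - φ t₂ = ((e t₁ - e t₂ : (ℝ ∙ u)ᗮ) : Ed (n+1)) := by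
      simp [hφ]
    rw [h1, ← map_sub]
    rw [show ‖((e (t₁ - t₂) : (ℝ ∙ u)ᗮ) : Ed (n+1))‖ = ‖e (t₁ - t₂)‖ from rfl]
    rw [e.norm_map]
  have hrange : Set.range φ = {s : Ed (n+1) | (⟪u, s⟫ : ℝ) = c} := by
    ext s
    simp only [Set.mem_range, Set.mem_setOf_eq]
    constructor
    · rintro ⟨t, rfl⟩
      show (⟪u, p + (e t : Ed (n+1))⟫ : ℝ) = c
      rw [inner_add_right, hinnerp, orth, add_zero]
    · intro hs
      have hmem : s - p ∈ (ℝ ∙ u)ᗮ := by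
        apply Submodule.mem_orthogonal_singleton_iff_inner_right.mpr
        rw [inner_sub_right, hs, hinnerp, sub_self]
      refine ⟨e.symm ⟨s - p, hmem⟩, ?_⟩
      show p + ((e (e.symm ⟨s - p, hmem⟩)) : Ed (n+1)) = s
      rw [e.apply_symm_apply]
      simp
  have hmap : Measure.map φ (μH[(n : ℝ)]) =
      (μH[(n : ℝ)] : Measure (Ed (n+1))).restrict {s : Ed (n+1) | (⟪u, s⟫ : ℝ) = c} := by
    rw [hiso.map_hausdorffMeasure (Or.inl (by positivity)), hrange]
  have hexp : ((n + 1 : ℕ) : ℝ) - 1 = (n : ℝ) := by push_cast; ring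
  rw [hexp, ← hmap]
  have hg : Measurable fun s : Ed (n+1) => ENNReal.ofReal ((1 + ‖s + W‖) ^ (-r)) := by
    have h1 : Continuous fun s : Ed (n+1) => 1 + ‖s + W‖ :=
      continuous_const.add ((continuous_id.add continuous_const).norm)
    have hc : Continuous fun s : Ed (n+1) => (1 + ‖s + W‖) ^ (-r) := by
      refine h1.rpow_const fun x => Or.inl ?_
      positivity
    exact (ENNReal.continuous_ofReal.comp hc).measurable
  rw [lintegral_map hg hiso.continuous.measurable]
  apply lintegral_mono
  intro t
  apply ENNReal.ofReal_le_ofReal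
  have hsum : φ t + W = (c + (⟪u, W⟫ : ℝ)) • u + (e t : Ed (n+1)) := by
    simp only [hφ, hp]
    module
  have hnorm : ‖φ t + W‖ ^ 2 = (c + (⟪u, W⟫ : ℝ)) ^ 2 + ‖t‖ ^ 2 := by
    rw [hsum, norm_add_sq_real, real_inner_smul_left, orth, norm_smul]
    rw [show ‖((e t : (ℝ ∙ u)ᗮ) : Ed (n+1))‖ = ‖e t‖ from rfl, e.norm_map]
    simp [hu, Real.norm_eq_abs, sq_abs]
  have hle : ‖t‖ ≤ ‖φ t + W‖ := by
    nlinarith [norm_nonneg (φ t + W), norm_nonneg t]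
  exact Real.rpow_le_rpow_of_nonpos (by positivity) (by linarith) (neg_nonpos.mpr hr)

/-- For `α > (d−1)/2`, the integral `∫_P ⟨W⟩^{2α}/(⟨s⟩^{2α}⟨s+W⟩^{2α}) dS(s)`
(w.r.t. (d−1)-dimensional Hausdorff measure on the affine hyperplane
`P = {s : ⟪u,s⟫ = c}`, `‖u‖ = 1`) is bounded uniformly over all hyperplanes `P`
and all `W ∈ ℝ^d`. -/
theorem stmt_12 (d : ℕ) (hd : 2 ≤ d) (α : ℝ) (hα : ((d : ℝ) - 1) / 2 < α) :
    ∃ C : ℝ≥0∞, C ≠ ⊤ ∧ ∀ (u : Ed d), ‖u‖ = 1 → ∀ (c : ℝ) (W : Ed d),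
      (∫⁻ s in {s : Ed d | (⟪u, s⟫ : ℝ) = c},
          ENNReal.ofReal ((jap W) ^ (2 * α) /
            ((jap s) ^ (2 * α) * (jap (s + W)) ^ (2 * α))) ∂μH[(d : ℝ) - 1]) ≤ C := by
  obtain ⟨n, rfl⟩ : ∃ n, d = n + 1 := ⟨d - 1, by omega⟩
  have hnα : (n : ℝ) < 2 * α := by push_cast at hα; linarith
  have hα0 : 0 < α := by
    have : (0 : ℝ) ≤ (n : ℝ) := Nat.cast_nonneg n
    linarith
  have hr : (0 : ℝ) ≤ 2 * α := by linarith
  set I : ℝ≥0∞ := ∫⁻ x : EuclideanSpace ℝ (Fin n),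
      ENNReal.ofReal ((1 + ‖x‖) ^ (-(2 * α))) ∂(μH[(n : ℝ)]) with hI_def
  have hI : I < ⊤ := finite_I n hnα
  refine ⟨ENNReal.ofReal (16 ^ α) * (I + I), ?_, ?_⟩
  · exact ENNReal.mul_ne_top ENNReal.ofReal_ne_top
      (ENNReal.add_ne_top.mpr ⟨hI.ne, hI.ne⟩)
  intro u hu c W
  set g1 : Ed (n+1) → ℝ≥0∞ := fun s => ENNReal.ofReal ((1 + ‖s‖) ^ (-(2 * α))) with hg1_def
  set g2 : Ed (n+1) → ℝ≥0∞ := fun s => ENNReal.ofReal ((1 + ‖s + W‖) ^ (-(2 * α))) with hg2_def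
  have hg1 : Measurable g1 := by
    have h1 : Continuous fun s : Ed (n+1) => 1 + ‖s‖ :=
      continuous_const.add continuous_norm
    have hc : Continuous fun s : Ed (n+1) => (1 + ‖s‖) ^ (-(2 * α)) := by
      refine h1.rpow_const fun x => Or.inl ?_
      positivity
    exact (ENNReal.continuous_ofReal.comp hc).measurable
  calc (∫⁻ s in {s : Ed (n+1) | (⟪u, s⟫ : ℝ) = c},
          ENNReal.ofReal ((jap W) ^ (2 * α) /
            ((jap s) ^ (2 * α) * (jap (s + W)) ^ (2 * α))) ∂μH[((n+1 : ℕ) : ℝ) - 1])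
      ≤ ∫⁻ s in {s : Ed (n+1) | (⟪u, s⟫ : ℝ) = c},
          ENNReal.ofReal (16 ^ α) * (g1 s + g2 s) ∂μH[((n+1 : ℕ) : ℝ) - 1] := by
        apply lintegral_mono
        intro s
        dsimp only [hg1_def, hg2_def]
        rw [← ENNReal.ofReal_add (by positivity) (by positivity),
          ← ENNReal.ofReal_mul (by positivity)]
        exact ENNReal.ofReal_le_ofReal (pointwise_bound α hα0 s W)
    _ = ENNReal.ofReal (16 ^ α) * ∫⁻ s in {s : Ed (n+1) | (⟪u, s⟫ : ℝ) = c},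
          (g1 s + g2 s) ∂μH[((n+1 : ℕ) : ℝ) - 1] :=
        lintegral_const_mul' _ _ ENNReal.ofReal_ne_top
    _ = ENNReal.ofReal (16 ^ α) *
          ((∫⁻ s in {s : Ed (n+1) | (⟪u, s⟫ : ℝ) = c}, g1 s ∂μH[((n+1 : ℕ) : ℝ) - 1]) +
           (∫⁻ s in {s : Ed (n+1) | (⟪u, s⟫ : ℝ) = c}, g2 s ∂μH[((n+1 : ℕ) : ℝ) - 1])) := by
        rw [lintegral_add_left hg1]
    _ ≤ ENNReal.ofReal (16 ^ α) * (I + I) := by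
        gcongr
        · have := hyperplane_le n hr u hu c 0
          simpa [hg1_def] using this
        · exact hyperplane_le n hr u hu c W
end
end

section
/- Suppose γ₁, γ₂ ∈ H^{α,β} with α, β > d/2, and the collision kernel satisfies ‖b‖_∞ < ∞. Then the loss term satisfies the instantaneous bilinear estimate ‖B⁻(γ₁,γ₂)‖_{H^{α,β}} ≤ C ‖b‖_∞ ‖γ₁‖_{H^{α,β}} ‖γ₂‖_{H^{α,β}}, where C depends only on d, α, β. The key reduction is: if I := sup_{ξ,ξ′} ∫ dη dη′ ⟨ξ+ξ′⟩^{2α} / (⟨ξ+ξ′−η−η′⟩^{2α} ⟨η+η′⟩^{2α} ⟨η−η′⟩^{2β}) < ∞, then the claimed bilinear bound holds with C² proportional to I. -/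
/-!
Peetre's inequality `⟨W⟩^{2α} ≤ 2^{2α} (⟨W - u⟩^{2α} + ⟨u⟩^{2α})` with `W = ξ + ξ'`, `u = η + η'`
bounds the integrand of `I` by `f(η + η') g(η - η')` with `f, g` built from `⟨·⟩^{-2α}` and
`⟨·⟩^{-2β}`, which are integrable because `2α, 2β > d`; the substitution
`(η, η') ↦ (η + η', η - η')` then bounds `I` by `∫ f ∫ g`.

For the bilinear bound put `m = (η + η')/2`. Cauchy–Schwarz in `(η, η')` with the weight
`w(ξ - m, ξ' - m) w(η, η')` gives
`w(ξ, ξ') G(ξ, ξ')² ≤ b² I ∫ (w g₁²)(ξ - m, ξ' - m) (w g₂²)(η, η')`, since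
`w(ξ, ξ') / (w(ξ - m, ξ' - m) w(η, η'))` is exactly the integrand of `I`; integrating in `(ξ, ξ')`
first and using translation invariance leaves the product of the two squared norms.
-/

open MeasureTheory Real
open scoped ENNReal

noncomputable section

/-- The squared `H^{α,β}` weight `⟨ξ+ξ′⟩^{2α}⟨ξ−ξ′⟩^{2β}`. -/
def w2 {d : ℕ} (α β : ℝ) (q : Ed d × Ed d) : ℝ≥0∞ :=
  ENNReal.ofReal ((jap (q.1 + q.2)) ^ (2 * α) * (jap (q.1 - q.2)) ^ (2 * β))

section JapaneseBracket

variable {d : ℕ}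

lemma norm_le_jap (y : Ed d) : ‖y‖ ≤ jap y :=
  Real.le_sqrt_of_sq_le (le_add_of_nonneg_left zero_le_one)

lemma jap_pos (y : Ed d) : 0 < jap y :=
  Real.sqrt_pos.2 (by positivity)

lemma sq_jap (y : Ed d) : jap y ^ 2 = 1 + ‖y‖ ^ 2 :=
  Real.sq_sqrt (by positivity)

@[fun_prop]
lemma measurable_jap : Measurable (jap (d := d)) := by
  unfold jap; fun_prop

lemma jap_add_le (x y : Ed d) : jap (x + y) ≤ jap x + jap y := by
  have hxy : ‖x + y‖ ^ 2 ≤ (‖x‖ + ‖y‖) ^ 2 := by gcongr; exact norm_add_le x y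
  have hprod : ‖x‖ * ‖y‖ ≤ jap x * jap y :=
    mul_le_mul (norm_le_jap x) (norm_le_jap y) (norm_nonneg y) (jap_pos x).le
  refine Real.sqrt_le_iff.2 ⟨(add_pos (jap_pos x) (jap_pos y)).le, ?_⟩
  nlinarith [sq_jap x, sq_jap y]

lemma jap_add_rpow_le {a : ℝ} (ha : 0 ≤ a) (x y : Ed d) :
    jap (x + y) ^ a ≤ 2 ^ a * (jap x ^ a + jap y ^ a) := by
  have hx := (jap_pos x).le
  have hy := (jap_pos y).le
  calc jap (x + y) ^ a ≤ (2 * max (jap x) (jap y)) ^ a := by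
        refine Real.rpow_le_rpow (jap_pos _).le ?_ ha
        linarith [jap_add_le x y, le_max_left (jap x) (jap y), le_max_right (jap x) (jap y)]
    _ = 2 ^ a * max (jap x) (jap y) ^ a := Real.mul_rpow zero_le_two (le_max_of_le_left hx)
    _ ≤ 2 ^ a * (jap x ^ a + jap y ^ a) := by
        gcongr
        rcases max_cases (jap x) (jap y) with ⟨h, -⟩ | ⟨h, -⟩ <;> rw [h]
        · linarith [Real.rpow_nonneg hy a]
        · linarith [Real.rpow_nonneg hx a]

lemma lintegral_jap_rpow_neg_lt_top {r : ℝ} (hr : (d : ℝ) < r) :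
    ∫⁻ y : Ed d, ENNReal.ofReal (jap y ^ (-r)) < ∞ := by
  have hdim : (Module.finrank ℝ (Ed d) : ℝ) < r := by rwa [finrank_euclideanSpace_fin]
  convert (integrable_rpow_neg_one_add_norm_sq (μ := volume) hdim).lintegral_lt_top using 4 with y
  rw [jap, Real.sqrt_eq_rpow, ← Real.rpow_mul (by positivity)]
  ring_nf

lemma div_jap_rpow_le {a b : ℝ} (ha : 0 ≤ a) (W u v : Ed d) :
    jap W ^ a / (jap (W - u) ^ a * jap u ^ a * jap v ^ b)
      ≤ 2 ^ a * (jap u ^ (-a) + jap (W - u) ^ (-a)) * jap v ^ (-b) := by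
  have hW := jap_add_rpow_le ha (W - u) u
  rw [sub_add_cancel] at hW
  have h₁ := Real.rpow_pos_of_pos (jap_pos (W - u)) a
  have h₂ := Real.rpow_pos_of_pos (jap_pos u) a
  have h₃ := Real.rpow_pos_of_pos (jap_pos v) b
  simp only [Real.rpow_neg (jap_pos _).le]
  rw [div_le_iff₀ (by positivity)]
  refine hW.trans_eq ?_
  field_simp

end JapaneseBracket

section Convolution

variable {E : Type*} [NormedAddCommGroup E] [NormedSpace ℝ E] [MeasurableSpace E] [BorelSpace E]
  [FiniteDimensional ℝ E] (μ : Measure E) [μ.IsAddHaarMeasure]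

lemma lintegral_comp_two_smul_sub {g : E → ℝ≥0∞} (hg : Measurable g) (x : E) :
    ∫⁻ y, g ((2 : ℝ) • y - x) ∂μ = ENNReal.ofReal ((2 ^ Module.finrank ℝ E)⁻¹) * ∫⁻ y, g y ∂μ := by
  have hmap := lintegral_map (μ := μ) (f := fun y => g (y - x)) (g := fun y => (2 : ℝ) • y)
    (by fun_prop) (by fun_prop)
  rw [Measure.map_addHaar_smul μ two_ne_zero, lintegral_smul_measure, smul_eq_mul,
    lintegral_sub_right_eq_self g x, abs_of_pos (by positivity)] at hmap
  exact hmap.symm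

lemma lintegral_lintegral_add_mul_sub {f g : E → ℝ≥0∞} (hf : Measurable f) (hg : Measurable g) :
    ∫⁻ η, ∫⁻ η', f (η + η') * g (η - η') ∂μ ∂μ
      = ENNReal.ofReal ((2 ^ Module.finrank ℝ E)⁻¹) * (∫⁻ x, f x ∂μ) * ∫⁻ y, g y ∂μ := by
  calc ∫⁻ η, ∫⁻ η', f (η + η') * g (η - η') ∂μ ∂μ
        = ∫⁻ η, ∫⁻ x, f x * g ((2 : ℝ) • η - x) ∂μ ∂μ := by
          refine lintegral_congr fun η => ?_
          rw [← lintegral_sub_right_eq_self _ η]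
          refine lintegral_congr fun x => ?_
          rw [add_sub_cancel, sub_sub_eq_add_sub, two_smul]
    _ = ∫⁻ x, f x * ∫⁻ η, g ((2 : ℝ) • η - x) ∂μ ∂μ := by
          rw [lintegral_lintegral_swap (by fun_prop)]
          exact lintegral_congr fun x => lintegral_const_mul _ (by fun_prop)
    _ = _ := by
          simp_rw [lintegral_comp_two_smul_sub μ hg]
          rw [lintegral_mul_const _ hf]
          ring

end Convolution

lemma ENNReal.rpow_two_inv_sq (x : ℝ≥0∞) : (x ^ (2⁻¹ : ℝ)) ^ 2 = x := by
  exact_mod_cast ENNReal.rpow_inv_natCast_pow two_ne_zero x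

lemma sq_lintegral_le_lintegral_mul_sq_mul_lintegral_inv {α : Type*} [MeasurableSpace α]
    {μ : Measure α} {f v : α → ℝ≥0∞} (hf : AEMeasurable f μ) (hv : AEMeasurable v μ)
    (hv0 : ∀ a, v a ≠ 0) (hvt : ∀ a, v a ≠ ∞) :
    (∫⁻ a, f a ∂μ) ^ 2 ≤ (∫⁻ a, v a * f a ^ 2 ∂μ) * ∫⁻ a, (v a)⁻¹ ∂μ := by
  have hsplit : ∀ a, (v a * f a ^ 2) ^ (2⁻¹ : ℝ) * (v a)⁻¹ ^ (2⁻¹ : ℝ) = f a := fun a => by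
    rw [← ENNReal.mul_rpow_of_nonneg _ _ (by norm_num), mul_right_comm,
      ENNReal.mul_inv_cancel (hv0 a) (hvt a), one_mul]
    exact_mod_cast ENNReal.pow_rpow_inv_natCast two_ne_zero (f a)
  have hHolder := ENNReal.lintegral_mul_norm_pow_le (hv.mul (hf.pow_const 2)) hv.inv
    (p := 2⁻¹) (q := 2⁻¹) (by norm_num) (by norm_num) (by norm_num)
  simp only [Pi.mul_apply, Pi.inv_apply, hsplit] at hHolder
  calc (∫⁻ a, f a ∂μ) ^ 2
      ≤ ((∫⁻ a, v a * f a ^ 2 ∂μ) ^ (2⁻¹ : ℝ) * (∫⁻ a, (v a)⁻¹ ∂μ) ^ (2⁻¹ : ℝ)) ^ 2 := by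
        gcongr
    _ = _ := by rw [mul_pow, ENNReal.rpow_two_inv_sq, ENNReal.rpow_two_inv_sq]

section TranslatedProduct

variable {E : Type*} [MeasurableSpace E] [AddGroup E] [MeasurableAdd E] [MeasurableSub₂ E]
  {μ : Measure E} [SFinite μ] [μ.IsAddRightInvariant]

lemma lintegral_weight_mul_sq_le {T : E → E} (hT : Measurable T) {w G g₁ g₂ : E → ℝ≥0∞}
    (hw : Measurable w) (hw0 : ∀ x, w x ≠ 0) (hwt : ∀ x, w x ≠ ∞)
    (hg₁ : Measurable g₁) (hg₂ : Measurable g₂) {b K : ℝ≥0∞}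
    (hG : ∀ c, G c ≤ b * ∫⁻ p, g₁ (c - T p) * g₂ p ∂μ)
    (hK : ∀ c, ∫⁻ p, w c * (w (c - T p) * w p)⁻¹ ∂μ ≤ K) :
    ∫⁻ c, w c * G c ^ 2 ∂μ
      ≤ K * b ^ 2 * (∫⁻ c, w c * g₁ c ^ 2 ∂μ) * ∫⁻ c, w c * g₂ c ^ 2 ∂μ := by
  set F₁ : E → ℝ≥0∞ := fun c => w c * g₁ c ^ 2
  set F₂ : E → ℝ≥0∞ := fun c => w c * g₂ c ^ 2
  have hF₁ : Measurable F₁ := by fun_prop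
  have hF₂ : Measurable F₂ := by fun_prop
  have hpointwise : ∀ c, w c * G c ^ 2 ≤ K * b ^ 2 * ∫⁻ p, F₁ (c - T p) * F₂ p ∂μ := by
    intro c
    have hCS := sq_lintegral_le_lintegral_mul_sq_mul_lintegral_inv (μ := μ)
      (f := fun p => g₁ (c - T p) * g₂ p) (v := fun p => w (c - T p) * w p)
      (by fun_prop) (by fun_prop) (fun p => mul_ne_zero (hw0 _) (hw0 _))
      (fun p => ENNReal.mul_ne_top (hwt _) (hwt _))
    calc w c * G c ^ 2 ≤ w c * (b * ∫⁻ p, g₁ (c - T p) * g₂ p ∂μ) ^ 2 := by gcongr; exact hG c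
      _ = b ^ 2 * (w c * (∫⁻ p, g₁ (c - T p) * g₂ p ∂μ) ^ 2) := by ring
      _ ≤ b ^ 2 * (w c * ((∫⁻ p, F₁ (c - T p) * F₂ p ∂μ) * ∫⁻ p, (w (c - T p) * w p)⁻¹ ∂μ)) := by
          gcongr
          refine hCS.trans_eq ?_
          congr 1
          exact lintegral_congr fun p => by ring
      _ = b ^ 2 * (∫⁻ p, w c * (w (c - T p) * w p)⁻¹ ∂μ) * ∫⁻ p, F₁ (c - T p) * F₂ p ∂μ := by
          rw [lintegral_const_mul' _ _ (hwt c)]; ring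
      _ ≤ b ^ 2 * K * ∫⁻ p, F₁ (c - T p) * F₂ p ∂μ := by gcongr; exact hK c
      _ = K * b ^ 2 * ∫⁻ p, F₁ (c - T p) * F₂ p ∂μ := by ring
  calc ∫⁻ c, w c * G c ^ 2 ∂μ ≤ ∫⁻ c, K * b ^ 2 * ∫⁻ p, F₁ (c - T p) * F₂ p ∂μ ∂μ :=
        lintegral_mono hpointwise
    _ = K * b ^ 2 * ∫⁻ p, (∫⁻ c, F₁ (c - T p) ∂μ) * F₂ p ∂μ := by
        rw [lintegral_const_mul _ (by fun_prop), lintegral_lintegral_swap (by fun_prop)]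
        congr 1
        exact lintegral_congr fun p => lintegral_mul_const _ (by fun_prop)
    _ = _ := by
        simp_rw [lintegral_sub_right_eq_self]
        rw [lintegral_const_mul _ hF₂]
        ring

end TranslatedProduct

section LossTerm

variable {d : ℕ}

lemma lintegral_lintegral_div_jap_rpow_le {a b : ℝ} (ha : 0 ≤ a) (W : Ed d) :
    ∫⁻ η : Ed d, ∫⁻ η' : Ed d, ENNReal.ofReal (jap W ^ a /
        (jap (W - η - η') ^ a * jap (η + η') ^ a * jap (η - η') ^ b))
      ≤ ENNReal.ofReal (2 ^ a) * (2 * ∫⁻ y : Ed d, ENNReal.ofReal (jap y ^ (-a)))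
          * ∫⁻ y : Ed d, ENNReal.ofReal (jap y ^ (-b)) := by
  set f : Ed d → ℝ≥0∞ := fun x =>
    ENNReal.ofReal (2 ^ a) * (ENNReal.ofReal (jap x ^ (-a)) + ENNReal.ofReal (jap (W - x) ^ (-a)))
  set g : Ed d → ℝ≥0∞ := fun y => ENNReal.ofReal (jap y ^ (-b))
  have hf : Measurable f := by fun_prop
  have hg : Measurable g := by fun_prop
  have hf_int :
      ∫⁻ x, f x = ENNReal.ofReal (2 ^ a) * (2 * ∫⁻ y : Ed d, ENNReal.ofReal (jap y ^ (-a))) := by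
    rw [lintegral_const_mul _ (by fun_prop), lintegral_add_left (by fun_prop),
      (Measure.measurePreserving_sub_left volume W).lintegral_comp
        (f := fun y => ENNReal.ofReal (jap y ^ (-a))) (by fun_prop), two_mul]
  calc _ ≤ ∫⁻ η : Ed d, ∫⁻ η' : Ed d, f (η + η') * g (η - η') := by
        gcongr with η η'
        have hj (x : Ed d) (r : ℝ) : 0 ≤ jap x ^ r := Real.rpow_nonneg (jap_pos x).le r
        rw [sub_sub]
        refine (ENNReal.ofReal_le_ofReal (div_jap_rpow_le ha W _ _)).trans_eq ?_
        rw [ENNReal.ofReal_mul (mul_nonneg (by positivity) (add_nonneg (hj _ _) (hj _ _))),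
          ENNReal.ofReal_mul (by positivity), ENNReal.ofReal_add (hj _ _) (hj _ _)]
    _ = ENNReal.ofReal ((2 ^ Module.finrank ℝ (Ed d))⁻¹) * (∫⁻ x, f x) * ∫⁻ y, g y :=
        lintegral_lintegral_add_mul_sub volume hf hg
    _ ≤ (∫⁻ x, f x) * ∫⁻ y, g y := by
        rw [mul_assoc]
        refine mul_le_of_le_one_left' (ENNReal.ofReal_le_one.2 (inv_le_one_of_one_le₀ ?_))
        exact one_le_pow₀ one_le_two
    _ = _ := by rw [hf_int]

def diagMean (p : Ed d × Ed d) : Ed d × Ed d :=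
  ((2 : ℝ)⁻¹ • (p.1 + p.2), (2 : ℝ)⁻¹ • (p.1 + p.2))

@[fun_prop]
lemma measurable_diagMean : Measurable (diagMean (d := d)) := by
  unfold diagMean; fun_prop

@[fun_prop]
lemma measurable_w2 {α β : ℝ} : Measurable (w2 (d := d) α β) := by
  unfold w2; fun_prop

lemma w2_ne_zero {α β : ℝ} (q : Ed d × Ed d) : w2 α β q ≠ 0 := by
  have := jap_pos (q.1 + q.2)
  have := jap_pos (q.1 - q.2)
  rw [w2, ENNReal.ofReal_ne_zero_iff]
  positivity

lemma w2_ne_top {α β : ℝ} (q : Ed d × Ed d) : w2 α β q ≠ ∞ := ENNReal.ofReal_ne_top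

lemma w2_mul_inv_w2_sub_diagMean_mul_w2 (α β : ℝ) (c p : Ed d × Ed d) :
    w2 α β c * (w2 α β (c - diagMean p) * w2 α β p)⁻¹
      = ENNReal.ofReal (jap (c.1 + c.2) ^ (2 * α) / (jap (c.1 + c.2 - p.1 - p.2) ^ (2 * α)
          * jap (p.1 + p.2) ^ (2 * α) * jap (p.1 - p.2) ^ (2 * β))) := by
  have hsum : (c - diagMean p).1 + (c - diagMean p).2 = c.1 + c.2 - p.1 - p.2 := by
    simp only [diagMean, Prod.fst_sub, Prod.snd_sub]; module
  have hdiff : (c - diagMean p).1 - (c - diagMean p).2 = c.1 - c.2 := by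
    simp only [diagMean, Prod.fst_sub, Prod.snd_sub]; abel
  have h₁ := jap_pos (c.1 + c.2 - p.1 - p.2)
  have h₂ := jap_pos (c.1 - c.2)
  have h₃ := jap_pos (p.1 + p.2)
  have h₄ := jap_pos (p.1 - p.2)
  have h₅ := jap_pos (c.1 + c.2)
  rw [w2, w2, w2, hsum, hdiff, ← ENNReal.ofReal_mul (by positivity),
    ← ENNReal.ofReal_inv_of_pos (by positivity), ← ENNReal.ofReal_mul (by positivity)]
  congr 1
  field_simp

end LossTerm

theorem stmt_15_general (d : ℕ) (α β : ℝ)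
    (hα : (d : ℝ) / 2 < α) (hβ : (d : ℝ) / 2 < β) :
    ∃ C : ℝ≥0∞, C ≠ ⊤ ∧
      (∀ ξ ξ' : Ed d,
        (∫⁻ η : Ed d, ∫⁻ η' : Ed d,
            ENNReal.ofReal ((jap (ξ + ξ')) ^ (2 * α) /
              ((jap (ξ + ξ' - η - η')) ^ (2 * α) * (jap (η + η')) ^ (2 * α) *
                (jap (η - η')) ^ (2 * β)))) ≤ C ^ 2)
      ∧ ∀ (bInfty : ℝ≥0∞) (G g₁ g₂ : Ed d × Ed d → ℝ≥0∞),
          Measurable g₁ → Measurable g₂ →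
          (∀ ξ ξ' : Ed d, G (ξ, ξ') ≤
            bInfty * ∫⁻ η : Ed d, ∫⁻ η' : Ed d,
              g₁ (ξ - (2:ℝ)⁻¹ • (η + η'), ξ' - (2:ℝ)⁻¹ • (η + η')) * g₂ (η, η')) →
          (∫⁻ q : Ed d × Ed d, w2 α β q * (G q) ^ 2)
            ≤ C ^ 2 * bInfty ^ 2 * (∫⁻ q : Ed d × Ed d, w2 α β q * (g₁ q) ^ 2)
                * ∫⁻ q : Ed d × Ed d, w2 α β q * (g₂ q) ^ 2 := by
  set K : ℝ≥0∞ := ENNReal.ofReal (2 ^ (2 * α))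
    * (2 * ∫⁻ y : Ed d, ENNReal.ofReal (jap y ^ (-(2 * α))))
    * ∫⁻ y : Ed d, ENNReal.ofReal (jap y ^ (-(2 * β)))
  have hd : (0 : ℝ) ≤ d := d.cast_nonneg
  have hK : K ≠ ∞ := by
    have hJα := lintegral_jap_rpow_neg_lt_top (d := d) (r := 2 * α) (by linarith)
    have hJβ := lintegral_jap_rpow_neg_lt_top (d := d) (r := 2 * β) (by linarith)
    finiteness
  have hI (ξ ξ' : Ed d) :=
    lintegral_lintegral_div_jap_rpow_le (b := 2 * β) (by linarith : 0 ≤ 2 * α) (ξ + ξ')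
  refine ⟨K ^ (2⁻¹ : ℝ), ENNReal.rpow_ne_top_of_nonneg (by norm_num) hK, ?_, ?_⟩ <;>
    rw [ENNReal.rpow_two_inv_sq]
  · exact hI
  intro b G g₁ g₂ hg₁ hg₂ hG
  rw [Measure.volume_eq_prod]
  refine lintegral_weight_mul_sq_le measurable_diagMean measurable_w2 w2_ne_zero w2_ne_top
    hg₁ hg₂ (fun ⟨ξ, ξ'⟩ => ?_) (fun c => ?_)
  · rw [lintegral_prod _ (by fun_prop)]
    exact hG ξ ξ'
  · simp_rw [w2_mul_inv_w2_sub_diagMean_mul_w2]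
    exact (lintegral_prod_le _).trans (hI c.1 c.2)

/-- Instantaneous bilinear estimate for the loss term in `H^{α,β}`, `α, β > d/2`.
The key reduction: the quantity
`I = sup_{ξ,ξ′} ∫ ⟨ξ+ξ′⟩^{2α}/(⟨ξ+ξ′−η−η′⟩^{2α}⟨η+η′⟩^{2α}⟨η−η′⟩^{2β}) dη dη′`
is finite, and consequently any `G` dominated (in Fourier variables, with the
collision-kernel bound `bInfty` in front) by the loss-term majorant
`bInfty ∫ g₁(ξ−(η+η′)/2, ξ′−(η+η′)/2) g₂(η,η′) dη dη′`
satisfies the squared `H^{α,β}` bound with constant `C² · bInfty²` proportional to `I`;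
i.e. `‖B⁻(γ₁,γ₂)‖_{H^{α,β}} ≤ C ‖b‖_∞ ‖γ₁‖_{H^{α,β}} ‖γ₂‖_{H^{α,β}}`. -/
theorem stmt_15 (d : ℕ) (hd : 1 ≤ d) (α β : ℝ)
    (hα : (d : ℝ) / 2 < α) (hβ : (d : ℝ) / 2 < β) :
    ∃ C : ℝ≥0∞, C ≠ ⊤ ∧
      (∀ ξ ξ' : Ed d,
        (∫⁻ η : Ed d, ∫⁻ η' : Ed d,
            ENNReal.ofReal ((jap (ξ + ξ')) ^ (2 * α) /
              ((jap (ξ + ξ' - η - η')) ^ (2 * α) * (jap (η + η')) ^ (2 * α) *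
                (jap (η - η')) ^ (2 * β)))) ≤ C ^ 2)
      ∧ ∀ (bInfty : ℝ≥0∞) (G g₁ g₂ : Ed d × Ed d → ℝ≥0∞),
          Measurable g₁ → Measurable g₂ →
          (∀ ξ ξ' : Ed d, G (ξ, ξ') ≤
            bInfty * ∫⁻ η : Ed d, ∫⁻ η' : Ed d,
              g₁ (ξ - (2:ℝ)⁻¹ • (η + η'), ξ' - (2:ℝ)⁻¹ • (η + η')) * g₂ (η, η')) →
          (∫⁻ q : Ed d × Ed d, w2 α β q * (G q) ^ 2)
            ≤ C ^ 2 * bInfty ^ 2 * (∫⁻ q : Ed d × Ed d, w2 α β q * (g₁ q) ^ 2)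
                * ∫⁻ q : Ed d × Ed d, w2 α β q * (g₂ q) ^ 2 :=
  stmt_15_general d α β hα hβ
end
end
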